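/- arXiv:2604.17170 — 2 statements merged into one kernel-verified Lean document; each statement's English description precedes it below -/
import Mathlib

section
/- Let D be a metric on ℂ inducing the Euclidean topology. Assume: (a) for every R > 0 there exists z ∈ ℂ such that Z_∞ ∩ B_R(0) = Z_z ∩ B_R(0), such that for every point w ∈ ℂ and every D-geodesic σ from w to ∞ whose image intersects B_R(0) there is a D-geodesic σ̃ from w to z with σ(t) = σ̃(t) for every t ≥ 0 such that σ(t) ∈ B_R(0), and such that for every D-geodesic τ : [0,T] → ℂ with τ(0) = z and every t ∈ (0,T), no path in Z_z ∖ {τ(t)} joins a point of τ([0,t)) to a point of τ((t,T)); (b) every p ∈ Z_∞ has exactly one D-geodesic to ∞; (c) for any two D-geodesics σ, σ' from points of ℂ to ∞ there exist τ, τ' ≥ 0 with σ(τ + t) = σ'(τ' + t) for all t ≥ 0. Then: (i) for every D-geodesic σ from a point of ℂ to ∞ and every t > 0, there is no path in Z_∞ ∖ {σ(t)} from a point of σ((0,t)) to a point of σ((t,∞)); (ii) every point of Z_∞ is a cut point of Z_∞, i.e. Z_∞ minus that point is not path-connected; (iii) any two distinct points of Z_∞ are joined by a continuous injective path in Z_∞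 which is unique up to reparametrization. -/
open Set Metric Filter

noncomputable section

/-- `D` is a metric on `ℂ`. -/
structure IsMetricOn (D : ℂ → ℂ → ℝ) : Prop where
  self_dist : ∀ x, D x x = 0
  eq_of_dist_eq_zero : ∀ x y, D x y = 0 → x = y
  symm : ∀ x y, D x y = D y x
  triangle : ∀ x y z, D x z ≤ D x y + D y z

/-- `D` induces the Euclidean topology on `ℂ`. -/
def InducesEuclTop (D : ℂ → ℂ → ℝ) : Prop :=
  (∀ z : ℂ, ∀ ε > (0:ℝ), ∃ δ > (0:ℝ), ∀ w, dist z w < δ → D z w < ε) ∧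
  (∀ z : ℂ, ∀ ε > (0:ℝ), ∃ δ > (0:ℝ), ∀ w, D z w < δ → dist z w < ε)

/-- The open `D`-ball `𝓑_t(z)`. -/
def DBall (D : ℂ → ℂ → ℝ) (z : ℂ) (t : ℝ) : Set ℂ := {w | D z w < t}

/-- A `D`-geodesic from `z` to `w`: a continuous map `σ : [0, D(z,w)] → ℂ` with `σ 0 = z`,
`σ (D z w) = w` and `D (σ t) (σ s) = s - t` for `0 ≤ t ≤ s ≤ D z w`. -/
def IsDGeodesic (D : ℂ → ℂ → ℝ) (z w : ℂ) (σ : ℝ → ℂ) : Prop :=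
  σ 0 = z ∧ σ (D z w) = w ∧ ContinuousOn σ (Set.Icc 0 (D z w)) ∧
    ∀ t s : ℝ, 0 ≤ t → t ≤ s → s ≤ D z w → D (σ t) (σ s) = s - t

/-- A `D`-geodesic from `w` to `∞`: a continuous map `σ : [0,∞) → ℂ` with `σ 0 = w` and
`D (σ t) (σ s) = s - t` for all `0 ≤ t ≤ s`. -/
def IsDGeodesicToInfty (D : ℂ → ℂ → ℝ) (w : ℂ) (σ : ℝ → ℂ) : Prop :=
  σ 0 = w ∧ ContinuousOn σ (Set.Ici 0) ∧
    ∀ t s : ℝ, 0 ≤ t → t ≤ s → D (σ t) (σ s) = s - t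

/-- The `D`-geodesic tree `Z_z` rooted at `z`. -/
def geoTree (D : ℂ → ℂ → ℝ) (z : ℂ) : Set ℂ :=
  {p | ∃ (w : ℂ) (σ : ℝ → ℂ) (t : ℝ), IsDGeodesic D z w σ ∧ 0 ≤ t ∧ t < D z w ∧ σ t = p}

/-- The `D`-geodesic tree `Z_∞` rooted at `∞`. -/
def geoTreeInfty (D : ℂ → ℂ → ℝ) : Set ℂ :=
  {p | ∃ (w : ℂ) (σ : ℝ → ℂ) (t : ℝ), IsDGeodesicToInfty D w σ ∧ 0 < t ∧ σ t = p}

/-- There is exactly one `D`-geodesic from `z` to `x` (it exists, and any two agree on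
`[0, D(z,x)]`). -/
def UniqueGeodesic (D : ℂ → ℂ → ℝ) (z x : ℂ) : Prop :=
  (∃ σ, IsDGeodesic D z x σ) ∧
    ∀ σ σ', IsDGeodesic D z x σ → IsDGeodesic D z x σ' →
      Set.EqOn σ σ' (Set.Icc 0 (D z x))

/-- An embedded (continuous injective) path in `X ⊆ ℂ` from `p` to `q`, parametrized on
`[0,1]`. -/
def IsEmbPathIn (X : Set ℂ) (p q : ℂ) (γ : ℝ → ℂ) : Prop :=
  ContinuousOn γ (Set.Icc 0 1) ∧ Set.InjOn γ (Set.Icc 0 1) ∧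
    γ '' Set.Icc 0 1 ⊆ X ∧ γ 0 = p ∧ γ 1 = q

lemma IsMetricOn.nonneg {D : ℂ → ℂ → ℝ} (hD : IsMetricOn D) (x y : ℂ) : 0 ≤ D x y := by
  have h := hD.triangle x y x
  rw [hD.self_dist, hD.symm y x] at h
  linarith

lemma IsDGeodesicToInfty.inj {D : ℂ → ℂ → ℝ} (hD : IsMetricOn D) {w : ℂ} {σ : ℝ → ℂ}
    (hσ : IsDGeodesicToInfty D w σ) {a b : ℝ} (ha : 0 ≤ a) (hb : 0 ≤ b)
    (hab : σ a = σ b) : a = b := by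
  rcases le_total a b with h | h
  · have h2 := hσ.2.2 a b ha h
    rw [hab, hD.self_dist] at h2; linarith
  · have h2 := hσ.2.2 b a hb h
    rw [hab, hD.self_dist] at h2; linarith

lemma IsDGeodesicToInfty.shift {D : ℂ → ℂ → ℝ} {w : ℂ} {σ : ℝ → ℂ}
    (hσ : IsDGeodesicToInfty D w σ) {t₀ : ℝ} (ht₀ : 0 ≤ t₀) :
    IsDGeodesicToInfty D (σ t₀) (fun r => σ (t₀ + r)) := by
  refine ⟨by simp, ?_, fun t s ht hts => ?_⟩
  · exact hσ.2.1.comp (continuous_const.add continuous_id).continuousOn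
      (fun x hx => by simp only [Set.mem_Ici] at hx ⊢; linarith)
  · rw [hσ.2.2 (t₀ + t) (t₀ + s) (by linarith) (by linarith)]; ring

lemma IsDGeodesicToInfty.mem_tree {D : ℂ → ℂ → ℝ} {w : ℂ} {σ : ℝ → ℂ}
    (hσ : IsDGeodesicToInfty D w σ) {r : ℝ} (hr : 0 < r) : σ r ∈ geoTreeInfty D :=
  ⟨w, σ, r, hσ, hr, rfl⟩

lemma IsDGeodesicToInfty.mem_tree' {D : ℂ → ℂ → ℝ} {w : ℂ} {σ : ℝ → ℂ}
    (hσ : IsDGeodesicToInfty D w σ) (hw : w ∈ geoTreeInfty D) {r : ℝ} (hr : 0 ≤ r) :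
    σ r ∈ geoTreeInfty D := by
  rcases eq_or_lt_of_le hr with h | h
  · rw [← h, hσ.1]; exact hw
  · exact hσ.mem_tree h

lemma joinedIn_seg {X : Set ℂ} {σ : ℝ → ℂ} (hc : ContinuousOn σ (Set.Ici 0))
    {r1 r2 : ℝ} (h0 : 0 ≤ r1) (h12 : r1 ≤ r2) (hX : ∀ r ∈ Set.Icc r1 r2, σ r ∈ X) :
    JoinedIn X (σ r1) (σ r2) := by
  have hmem : ∀ x : unitInterval, r1 + (x : ℝ) * (r2 - r1) ∈ Set.Icc r1 r2 := by
    intro x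
    constructor
    · nlinarith [x.2.1, x.2.2]
    · nlinarith [x.2.1, x.2.2]
  have hcont : Continuous fun x : unitInterval => σ (r1 + (x : ℝ) * (r2 - r1)) := by
    refine hc.comp_continuous ?_ (fun x => le_trans h0 (hmem x).1)
    exact continuous_const.add (continuous_subtype_val.mul continuous_const)
  refine ⟨⟨⟨fun x => σ (r1 + (x : ℝ) * (r2 - r1)), hcont⟩, ?_, ?_⟩, fun x => hX _ (hmem x)⟩
  · show σ (r1 + ((0 : unitInterval) : ℝ) * (r2 - r1)) = σ r1
    norm_num
  · show σ (r1 + ((1 : unitInterval) : ℝ) * (r2 - r1)) = σ r2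
    norm_num
lemma part_i (D : ℂ → ℂ → ℝ) (hD : IsMetricOn D)
    (ha : ∀ R > (0:ℝ), ∃ z : ℂ,
      geoTreeInfty D ∩ Metric.ball (0:ℂ) R = geoTree D z ∩ Metric.ball (0:ℂ) R ∧
      (∀ (w : ℂ) (σ : ℝ → ℂ), IsDGeodesicToInfty D w σ →
        (σ '' Set.Ici 0 ∩ Metric.ball (0:ℂ) R).Nonempty →
        ∃ σ' : ℝ → ℂ, IsDGeodesic D w z σ' ∧
          ∀ t : ℝ, 0 ≤ t → σ t ∈ Metric.ball (0:ℂ) R → σ t = σ' t) ∧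
      (∀ (τ : ℝ → ℂ) (T : ℝ), τ 0 = z → ContinuousOn τ (Set.Icc 0 T) →
        (∀ u v : ℝ, 0 ≤ u → u ≤ v → v ≤ T → D (τ u) (τ v) = v - u) →
        ∀ t ∈ Set.Ioo 0 T, ∀ a ∈ τ '' Set.Ico 0 t, ∀ b ∈ τ '' Set.Ioo t T,
          ¬ JoinedIn (geoTree D z \ {τ t}) a b)) :
    ∀ (w : ℂ) (σ : ℝ → ℂ), IsDGeodesicToInfty D w σ → ∀ t > (0:ℝ),
      ∀ a ∈ σ '' Set.Ioo 0 t, ∀ b ∈ σ '' Set.Ioi t,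
        ¬ JoinedIn (geoTreeInfty D \ {σ t}) a b := by
  rintro w σ hσ t ht a ⟨s, hs, rfl⟩ b ⟨u, hu, rfl⟩ hJ
  simp only [Set.mem_Ioo] at hs
  simp only [Set.mem_Ioi] at hu
  obtain ⟨g, hg⟩ := hJ
  set K := Set.range (fun x : unitInterval => g x) with hKdef
  have hKcomp : IsCompact K := isCompact_range g.continuous
  have hKP : ∀ x ∈ K, x ∈ geoTreeInfty D \ {σ t} := by
    rintro x ⟨y, rfl⟩; exact hg y
  have hsU : u < u + 1 := by linarith
  have hσcomp : IsCompact (σ '' Set.Icc 0 (u + 1)) :=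
    isCompact_Icc.image_of_continuousOn (hσ.2.1.mono (fun x hx => hx.1))
  obtain ⟨R, hRpos, hRsub⟩ := (hKcomp.union hσcomp).isBounded.subset_ball_lt 0 0
  obtain ⟨z, h1, h2, h3⟩ := ha R hRpos
  have hball : ∀ r : ℝ, 0 ≤ r → r ≤ u + 1 → σ r ∈ Metric.ball (0:ℂ) R :=
    fun r h0 h1' => hRsub (Or.inr ⟨r, ⟨h0, h1'⟩, rfl⟩)
  obtain ⟨σ', hσ'g, h4⟩ := h2 w σ hσ ⟨σ 0, ⟨0, Set.mem_Ici.2 le_rfl, rfl⟩, hball 0 le_rfl (by linarith)⟩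
  obtain ⟨hσ'0, hσ'L, hσ'cont, hσ'D⟩ := hσ'g
  set L := D w z with hLdef
  have hL0 : 0 ≤ L := hD.nonneg w z
  have hagree : ∀ r : ℝ, 0 ≤ r → r ≤ u + 1 → σ r = σ' r :=
    fun r h0 h1' => h4 r h0 (hball r h0 h1')
  have hinj : ∀ a b : ℝ, 0 ≤ a → 0 ≤ b → σ a = σ b → a = b :=
    fun a b h0 h1' => hσ.inj hD h0 h1'
  have hZZ : ∀ x : ℂ, x ∈ geoTreeInfty D → x ∈ Metric.ball (0:ℂ) R → x ∈ geoTree D z := by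
    intro x hx hxb
    have hmem : x ∈ geoTreeInfty D ∩ Metric.ball (0:ℂ) R := ⟨hx, hxb⟩
    rw [h1] at hmem
    exact hmem.1
  have hσZ : ∀ r : ℝ, 0 < r → r ≤ u + 1 → σ r ∈ geoTree D z :=
    fun r h0 h1' => hZZ _ (hσ.mem_tree h0) (hball r h0.le h1')
  have hKZ : ∀ x ∈ K, x ∈ geoTree D z :=
    fun x hx => hZZ x (hKP x hx).1 (hRsub (Or.inl hx))
  -- reversed geodesic from z to w
  have htaucont : ContinuousOn (fun r => σ' (L - r)) (Set.Icc 0 L) := by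
    refine hσ'cont.comp ((continuous_const.sub continuous_id).continuousOn) ?_
    intro x hx
    simp only [Set.mem_Icc] at hx ⊢
    constructor <;> linarith [hx.1, hx.2]
  have htau0 : (fun r => σ' (L - r)) 0 = z := by simpa using hσ'L
  have htauD : ∀ u' v' : ℝ, 0 ≤ u' → u' ≤ v' → v' ≤ L →
      D ((fun r => σ' (L - r)) u') ((fun r => σ' (L - r)) v') = v' - u' := by
    intro u' v' h0 h12 hT
    show D (σ' (L - u')) (σ' (L - v')) = v' - u'
    rw [hD.symm, hσ'D (L - v') (L - u') (by linarith) (by linarith) (by linarith)]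
    ring
  rcases lt_trichotomy L t with hLt | hLt | hLt
  · -- Case L < t : forward geodesic from z along σ
    have hzL : σ L = z := by rw [hagree L hL0 (by linarith)]; exact hσ'L
    have hmid : L < max s ((L + t) / 2) := lt_max_of_lt_right (by linarith)
    have hmid2 : max s ((L + t) / 2) < t := max_lt hs.2 (by linarith)
    have hmid3 : s ≤ max s ((L + t) / 2) := le_max_left _ _
    set s'' := max s ((L + t) / 2) with hs''def
    have happ := h3 (fun r => σ (L + r)) (u + 1 - L) (by simpa using hzL)
      (hσ.2.1.comp (continuous_const.add continuous_id).continuousOn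
        (fun x hx => by simp only [Set.mem_Icc] at hx; simp only [Set.mem_Ici]; linarith [hx.1]))
      (fun u' v' h0 h12 hT => by
        show D (σ (L + u')) (σ (L + v')) = v' - u'
        rw [hσ.2.2 (L + u') (L + v') (by linarith) (by linarith)]; ring)
      (t - L) ⟨by linarith, by linarith⟩
      (σ s'') ⟨s'' - L, ⟨by linarith, by linarith⟩, by
        show σ (L + (s'' - L)) = σ s''
        rw [show L + (s'' - L) = s'' by ring]⟩
      (σ u) ⟨u - L, ⟨by linarith, by linarith⟩, by
        show σ (L + (u - L)) = σ u
        rw [show L + (u - L) = u by ring]⟩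
    beta_reduce at happ
    rw [show L + (t - L) = t by ring] at happ
    refine happ ?_
    have hseg : JoinedIn (geoTree D z \ {σ t}) (σ s) (σ s'') := by
      refine joinedIn_seg hσ.2.1 hs.1.le hmid3 ?_
      intro r hr
      refine ⟨hσZ r (by linarith [hr.1, hs.1]) (by linarith [hr.2]), ?_⟩
      simp only [Set.mem_singleton_iff]
      intro hcon
      have := hinj r t (by linarith [hr.1, hs.1]) ht.le hcon
      linarith [hr.2]
    have hJz : JoinedIn (geoTree D z \ {σ t}) (σ s) (σ u) :=
      ⟨g, fun x => ⟨hKZ _ ⟨x, rfl⟩, (hg x).2⟩⟩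
    exact hseg.symm.trans hJz
  · -- Case L = t : the removed point is z itself
    have hzt : σ t = z := by
      rw [hagree t ht.le (by linarith), ← hLt]; exact hσ'L
    have hzK : z ∉ K := fun h => (hKP z h).2 (by rw [← hzt]; exact Set.mem_singleton _)
    obtain ⟨ε, hε, hεK⟩ := Metric.isOpen_iff.1 hKcomp.isClosed.isOpen_compl z hzK
    have hcw : ContinuousWithinAt σ (Set.Ici 0) t := hσ.2.1 t (Set.mem_Ici.2 ht.le)
    obtain ⟨δ, hδ, hδε⟩ := Metric.continuousWithinAt_iff.1 hcw ε hε
    set m := max s (t - δ / 2) with hmdef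
    have hmt : m < t := max_lt hs.2 (by linarith)
    set s₂ := (m + t) / 2 with hs₂def
    have hs₂1 : s < s₂ := lt_of_le_of_lt (le_max_left _ _) (by rw [hs₂def]; linarith)
    have hs₂2 : s₂ < t := by rw [hs₂def]; linarith
    have hs₂0 : 0 < s₂ := lt_trans hs.1 hs₂1
    have hs₂δ : dist s₂ t < δ := by
      rw [Real.dist_eq, abs_sub_lt_iff]
      have : t - δ / 2 ≤ m := le_max_right _ _
      constructor <;> [linarith; skip]
      rw [hs₂def]; linarith
    have hcball : σ s₂ ∈ Metric.ball z ε := by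
      rw [← hzt]
      exact hδε (Set.mem_Ici.2 hs₂0.le) hs₂δ
    have hcK : σ s₂ ∉ K := hεK hcball
    -- z ∈ geoTree D z
    have hDzw : D z w = L := by rw [hLdef, hD.symm]
    have htaugeo : IsDGeodesic D z w (fun r => σ' (L - r)) := by
      refine ⟨htau0, ?_, ?_, ?_⟩
      · rw [hDzw]; simpa using hσ'0
      · rw [hDzw]; exact htaucont
      · rw [hDzw]; exact htauD
    have hzZ : z ∈ geoTree D z := ⟨w, _, 0, htaugeo, le_rfl, by rw [hDzw, hLt]; exact ht, htau0⟩
    -- apply h3 to the reversed geodesic, cutting at σ s₂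
    have hcut : (fun r => σ' (L - r)) (L - s₂) = σ s₂ := by
      show σ' (L - (L - s₂)) = σ s₂
      rw [show L - (L - s₂) = s₂ by ring]
      exact (hagree s₂ hs₂0.le (by linarith)).symm
    have happ := h3 (fun r => σ' (L - r)) L htau0 htaucont htauD
      (L - s₂) ⟨by linarith, by linarith⟩
      z ⟨0, ⟨le_rfl, by linarith⟩, htau0⟩
      (σ s) ⟨L - s, ⟨by linarith, by linarith [hs.1]⟩, by
        show σ' (L - (L - s)) = σ s
        rw [show L - (L - s) = s by ring]
        exact (hagree s hs.1.le (by linarith)).symm⟩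
    rw [show σ' (L - (L - s₂)) = σ s₂ from hcut] at happ
    refine happ ?_
    -- join z to σ u along σ, then σ u to σ s via the path g
    have hseg : JoinedIn (geoTree D z \ {σ s₂}) (σ t) (σ u) := by
      refine joinedIn_seg hσ.2.1 ht.le hu.le ?_
      intro r hr
      have hr0 : 0 < r := lt_of_lt_of_le ht hr.1
      refine ⟨?_, ?_⟩
      · rcases eq_or_lt_of_le hr.1 with h | h
        · rw [← h, hzt]; exact hzZ
        · exact hσZ r hr0 (by linarith [hr.2])
      · simp only [Set.mem_singleton_iff]
        intro hcon
        have := hinj r s₂ hr0.le hs₂0.le hcon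
        linarith [hr.1]
    have hgK : JoinedIn (geoTree D z \ {σ s₂}) (σ s) (σ u) := by
      refine ⟨g, fun x => ⟨hKZ _ ⟨x, rfl⟩, ?_⟩⟩
      simp only [Set.mem_singleton_iff]
      intro hcon
      exact hcK (hcon ▸ ⟨x, rfl⟩)
    rw [hzt] at hseg
    exact hseg.trans hgK.symm
  · -- Case t < L : reversed geodesic from z, cut at σ t
    have hu'' : t < min u ((t + L) / 2) := lt_min hu (by linarith)
    have hu''2 : min u ((t + L) / 2) ≤ u := min_le_left _ _
    have hu''3 : min u ((t + L) / 2) < L := lt_of_le_of_lt (min_le_right _ _) (by linarith)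
    set u'' := min u ((t + L) / 2) with hu''def
    have hcut : (fun r => σ' (L - r)) (L - t) = σ t := by
      show σ' (L - (L - t)) = σ t
      rw [show L - (L - t) = t by ring]
      exact (hagree t ht.le (by linarith)).symm
    have happ := h3 (fun r => σ' (L - r)) L htau0 htaucont htauD
      (L - t) ⟨by linarith, by linarith⟩
      (σ u'') ⟨L - u'', ⟨by linarith, by linarith⟩, by
        show σ' (L - (L - u'')) = σ u''
        rw [show L - (L - u'') = u'' by ring]
        exact (hagree u'' (by linarith) (by linarith)).symm⟩
      (σ s) ⟨L - s, ⟨by linarith [hs.2], by linarith [hs.1]⟩, by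
        show σ' (L - (L - s)) = σ s
        rw [show L - (L - s) = s by ring]
        exact (hagree s hs.1.le (by linarith)).symm⟩
    rw [show σ' (L - (L - t)) = σ t from hcut] at happ
    refine happ ?_
    have hseg : JoinedIn (geoTree D z \ {σ t}) (σ u'') (σ u) := by
      refine joinedIn_seg hσ.2.1 (by linarith) hu''2 ?_
      intro r hr
      refine ⟨hσZ r (by linarith [hr.1]) (by linarith [hr.2]), ?_⟩
      simp only [Set.mem_singleton_iff]
      intro hcon
      have := hinj r t (by linarith [hr.1]) ht.le hcon
      linarith [hr.1]
    have hJz : JoinedIn (geoTree D z \ {σ t}) (σ s) (σ u) :=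
      ⟨g, fun x => ⟨hKZ _ ⟨x, rfl⟩, (hg x).2⟩⟩
    exact hseg.trans hJz.symm
/-- Unique paths in `Z_∞`.
Assume `D` induces the Euclidean topology and:
(a) for every `R > 0` there is `z` with `Z_∞ ∩ B_R(0) = Z_z ∩ B_R(0)`, with the geodesic
transfer property, and such that removing an interior point of a `D`-geodesic from `z`
separates its past from its future in `Z_z`;
(b) every `p ∈ Z_∞` has exactly one `D`-geodesic to `∞`;
(c) any two `D`-geodesics to `∞` eventually merge.
Then:
(i) removing an interior point of a `D`-geodesic to `∞` separates its past from its future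
in `Z_∞`;
(ii) every point of `Z_∞` is a cut point of `Z_∞`;
(iii) any two distinct points of `Z_∞` are joined by a continuous injective path in `Z_∞`,
unique up to reparametrization (i.e. with uniquely determined image). -/
theorem statement_12 (D : ℂ → ℂ → ℝ) (hD : IsMetricOn D) (htop : InducesEuclTop D)
    (ha : ∀ R > (0:ℝ), ∃ z : ℂ,
      geoTreeInfty D ∩ Metric.ball (0:ℂ) R = geoTree D z ∩ Metric.ball (0:ℂ) R ∧
      (∀ (w : ℂ) (σ : ℝ → ℂ), IsDGeodesicToInfty D w σ →
        (σ '' Set.Ici 0 ∩ Metric.ball (0:ℂ) R).Nonempty →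
        ∃ σ' : ℝ → ℂ, IsDGeodesic D w z σ' ∧
          ∀ t : ℝ, 0 ≤ t → σ t ∈ Metric.ball (0:ℂ) R → σ t = σ' t) ∧
      (∀ (τ : ℝ → ℂ) (T : ℝ), τ 0 = z → ContinuousOn τ (Set.Icc 0 T) →
        (∀ u v : ℝ, 0 ≤ u → u ≤ v → v ≤ T → D (τ u) (τ v) = v - u) →
        ∀ t ∈ Set.Ioo 0 T, ∀ a ∈ τ '' Set.Ico 0 t, ∀ b ∈ τ '' Set.Ioo t T,
          ¬ JoinedIn (geoTree D z \ {τ t}) a b))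
    (hb : ∀ p ∈ geoTreeInfty D, (∃ σ, IsDGeodesicToInfty D p σ) ∧
      ∀ σ σ' : ℝ → ℂ, IsDGeodesicToInfty D p σ → IsDGeodesicToInfty D p σ' →
        Set.EqOn σ σ' (Set.Ici 0))
    (hc : ∀ (w w' : ℂ) (σ σ' : ℝ → ℂ), IsDGeodesicToInfty D w σ →
      IsDGeodesicToInfty D w' σ' →
      ∃ τ τ' : ℝ, 0 ≤ τ ∧ 0 ≤ τ' ∧ ∀ t ≥ (0:ℝ), σ (τ + t) = σ' (τ' + t)) :
    -- (i)
    (∀ (w : ℂ) (σ : ℝ → ℂ), IsDGeodesicToInfty D w σ → ∀ t > (0:ℝ),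
      ∀ a ∈ σ '' Set.Ioo 0 t, ∀ b ∈ σ '' Set.Ioi t,
        ¬ JoinedIn (geoTreeInfty D \ {σ t}) a b) ∧
    -- (ii)
    (∀ p ∈ geoTreeInfty D, ¬ IsPathConnected (geoTreeInfty D \ {p})) ∧
    -- (iii)
    (∀ p ∈ geoTreeInfty D, ∀ q ∈ geoTreeInfty D, p ≠ q →
      (∃ γ : ℝ → ℂ, IsEmbPathIn (geoTreeInfty D) p q γ) ∧
      ∀ γ γ' : ℝ → ℂ, IsEmbPathIn (geoTreeInfty D) p q γ →
        IsEmbPathIn (geoTreeInfty D) p q γ' →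
        γ '' Set.Icc 0 1 = γ' '' Set.Icc 0 1) := by
  have hi := part_i D hD ha
  refine ⟨hi, ?_, ?_⟩
  · -- (ii)
    rintro p ⟨w, sg, t₀, hsg, ht₀, hpt⟩ hPC
    have haZ : sg (t₀ / 2) ∈ geoTreeInfty D \ {p} := by
      refine ⟨hsg.mem_tree (by linarith), ?_⟩
      simp only [Set.mem_singleton_iff]
      intro h
      rw [← hpt] at h
      have := hsg.inj hD (by linarith) (by linarith) h
      linarith
    have hbZ : sg (t₀ + 1) ∈ geoTreeInfty D \ {p} := by
      refine ⟨hsg.mem_tree (by linarith), ?_⟩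
      simp only [Set.mem_singleton_iff]
      intro h
      rw [← hpt] at h
      have := hsg.inj hD (by linarith) (by linarith) h
      linarith
    have hJ := hPC.joinedIn _ haZ _ hbZ
    rw [← hpt] at hJ
    exact hi w sg hsg t₀ ht₀ _ ⟨t₀ / 2, ⟨by linarith, by linarith⟩, rfl⟩
      _ ⟨t₀ + 1, Set.mem_Ioi.2 (by linarith), rfl⟩ hJ
  · -- (iii)
    rintro p hp q hq hpq
    obtain ⟨⟨σp, hσp⟩, -⟩ := hb p hp
    obtain ⟨⟨σq, hσq⟩, -⟩ := hb q hq
    obtain ⟨τ₀, τ₁, hτ₀, hτ₁, hmerge⟩ := hc p q σp σq hσp hσq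
    set c := τ₁ - τ₀ with hcdef
    have hmatch : ∀ x y : ℝ, 0 ≤ x → 0 ≤ y → σp x = σq y → y = x + c := by
      intro x y hx hy hxy
      have h1 : IsDGeodesicToInfty D (σp x) (fun r => σp (x + r)) := hσp.shift hx
      have h2 : IsDGeodesicToInfty D (σp x) (fun r => σq (y + r)) := by
        rw [hxy]; exact hσq.shift hy
      have hmem : σp x ∈ geoTreeInfty D := hσp.mem_tree' hp hx
      have heq := (hb _ hmem).2 _ _ h1 h2
      set M := max x τ₀ with hM
      have e1 : σp (x + (M - x)) = σq (y + (M - x)) :=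
        heq (Set.mem_Ici.2 (sub_nonneg.2 (le_max_left x τ₀)))
      rw [show x + (M - x) = M by ring] at e1
      have e2 := hmerge (M - τ₀) (sub_nonneg.2 (le_max_right x τ₀))
      rw [show τ₀ + (M - τ₀) = M by ring] at e2
      have e3 : y + (M - x) = τ₁ + (M - τ₀) := by
        refine hσq.inj hD ?_ ?_ (e1.symm.trans e2)
        · have := le_max_left x τ₀; linarith
        · have := le_max_right x τ₀; linarith
      rw [hcdef]; linarith
    set m₀ := max 0 (-c) with hm₀
    have hm₀0 : (0:ℝ) ≤ m₀ := le_max_left _ _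
    have hm₀c : -c ≤ m₀ := le_max_right _ _
    set A := {x : ℝ | m₀ ≤ x ∧ σp x = σq (x + c)} with hA
    have hτ₀A : τ₀ ∈ A := by
      constructor
      · rw [hm₀]; exact max_le hτ₀ (by linarith)
      · have h0 := hmerge 0 le_rfl
        simp only [add_zero] at h0
        rw [show τ₀ + c = τ₁ by rw [hcdef]; ring]
        exact h0
    have hAclosed : IsClosed A := by
      have hF : Continuous fun x : ℝ => σp (max 0 x) :=
        hσp.2.1.comp_continuous (continuous_const.max continuous_id)
          (fun x => Set.mem_Ici.2 (le_max_left _ _))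
      have hG : Continuous fun x : ℝ => σq (max 0 (x + c)) :=
        hσq.2.1.comp_continuous (continuous_const.max (continuous_id.add continuous_const))
          (fun x => Set.mem_Ici.2 (le_max_left _ _))
      have hAeq : A = Set.Ici m₀ ∩ {x : ℝ | σp (max 0 x) = σq (max 0 (x + c))} := by
        ext x
        simp only [hA, Set.mem_setOf_eq, Set.mem_inter_iff, Set.mem_Ici]
        constructor
        · rintro ⟨h1, h2⟩
          refine ⟨h1, ?_⟩
          rw [max_eq_right (by linarith), max_eq_right (by linarith)]
          exact h2
        · rintro ⟨h1, h2⟩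
          refine ⟨h1, ?_⟩
          rwa [max_eq_right (by linarith), max_eq_right (by linarith)] at h2
      rw [hAeq]
      exact isClosed_Ici.inter (isClosed_eq hF hG)
    set t₁ := sInf A with ht₁def
    have htA : t₁ ∈ A := hAclosed.csInf_mem ⟨τ₀, hτ₀A⟩ ⟨m₀, fun x hx => hx.1⟩
    have hlb : ∀ x ∈ A, t₁ ≤ x := fun x hx => csInf_le ⟨m₀, fun y hy => hy.1⟩ hx
    have hA1 : 0 ≤ t₁ := le_trans hm₀0 htA.1
    have hA2 : 0 ≤ t₁ + c := by have := htA.1; linarith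
    have hapex : σp t₁ = σq (t₁ + c) := htA.2
    set T0 := t₁ + (t₁ + c) with hT0def
    have hT0 : 0 < T0 := by
      rcases lt_or_eq_of_le (add_nonneg hA1 hA2) with h | h
      · exact h
      · exfalso
        have h1 : t₁ = 0 := by linarith [hA1, hA2, h.symm]
        have h2 : c = 0 := by linarith [hA1, hA2, h.symm]
        have hx := hapex
        rw [h1, h2] at hx
        norm_num at hx
        rw [hσp.1, hσq.1] at hx
        exact hpq hx
    set f : ℝ → ℂ := fun r => if r ≤ t₁ then σp r else σq (T0 - r) with hfdef
    have hfcont : ContinuousOn f (Set.Icc 0 T0) := by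
      have hFc : Continuous fun r : ℝ => σp (max 0 r) :=
        hσp.2.1.comp_continuous (continuous_const.max continuous_id)
          (fun x => Set.mem_Ici.2 (le_max_left _ _))
      have hGc : Continuous fun r : ℝ => σq (max 0 (T0 - r)) :=
        hσq.2.1.comp_continuous (continuous_const.max (continuous_const.sub continuous_id))
          (fun x => Set.mem_Ici.2 (le_max_left _ _))
      have hglue : Continuous fun r : ℝ =>
          if r ≤ t₁ then σp (max 0 r) else σq (max 0 (T0 - r)) := by
        refine Continuous.if_le hFc hGc continuous_id continuous_const ?_
        intro x hx
        rw [hx, max_eq_right hA1, show T0 - t₁ = t₁ + c by rw [hT0def]; ring,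
          max_eq_right hA2]
        exact hapex
      refine hglue.continuousOn.congr ?_
      intro x hx
      simp only [hfdef]
      by_cases h : x ≤ t₁
      · rw [if_pos h, if_pos h, max_eq_right hx.1]
      · rw [if_neg h, if_neg h, max_eq_right (by linarith [hx.2] : (0:ℝ) ≤ T0 - x)]
    have hcross : ∀ r1 r2 : ℝ, 0 ≤ r1 → r1 ≤ t₁ → t₁ < r2 → r2 ≤ T0 →
        σp r1 = σq (T0 - r2) → False := by
      intro r1 r2 h1 h2 h3 h4 heq
      have hy : T0 - r2 = r1 + c := hmatch r1 (T0 - r2) h1 (by linarith) heq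
      have hr1A : r1 ∈ A := by
        refine ⟨by rw [hm₀]; exact max_le h1 (by linarith), ?_⟩
        rw [← hy]; exact heq
      have hge := hlb r1 hr1A
      have hr1 : r1 = t₁ := le_antisymm h2 hge
      rw [hr1] at hy
      have : r2 = t₁ := by rw [hT0def] at hy; linarith
      linarith
    have hfinj : Set.InjOn f (Set.Icc 0 T0) := by
      intro r1 hr1 r2 hr2 heq
      simp only [hfdef] at heq
      by_cases c1 : r1 ≤ t₁ <;> by_cases c2 : r2 ≤ t₁
      · rw [if_pos c1, if_pos c2] at heq
        exact hσp.inj hD hr1.1 hr2.1 heq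
      · rw [if_pos c1, if_neg c2] at heq
        exact absurd heq (fun h => hcross r1 r2 hr1.1 c1 (lt_of_not_ge c2) hr2.2 h)
      · rw [if_neg c1, if_pos c2] at heq
        exact absurd heq.symm (fun h => hcross r2 r1 hr2.1 c2 (lt_of_not_ge c1) hr1.2 h)
      · rw [if_neg c1, if_neg c2] at heq
        have := hσq.inj hD (by linarith [hr1.2]) (by linarith [hr2.2]) heq
        linarith
    set S := σp '' Set.Icc 0 t₁ ∪ σq '' Set.Icc 0 (t₁ + c) with hSdef
    have hfim : f '' Set.Icc 0 T0 = S := by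
      apply Set.Subset.antisymm
      · rintro x ⟨r, hr, rfl⟩
        by_cases h : r ≤ t₁
        · exact Or.inl ⟨r, ⟨hr.1, h⟩, by simp only [hfdef]; rw [if_pos h]⟩
        · refine Or.inr ⟨T0 - r, ⟨by linarith [hr.2], by
            have := lt_of_not_ge h; rw [hT0def]; linarith⟩, ?_⟩
          simp only [hfdef]; rw [if_neg h]
      · rintro x (⟨r, hr, rfl⟩ | ⟨y, hy, rfl⟩)
        · exact ⟨r, ⟨hr.1, by linarith [hr.2]⟩, by simp only [hfdef]; rw [if_pos hr.2]⟩
        · rcases eq_or_lt_of_le hy.2 with hyE | hyL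
          · refine ⟨t₁, ⟨hA1, by linarith⟩, ?_⟩
            simp only [hfdef]
            rw [if_pos le_rfl, hapex, ← hyE]
          · refine ⟨T0 - y, ⟨by rw [hT0def]; linarith [hy.1], by linarith [hy.1]⟩, ?_⟩
            have hgt : ¬ (T0 - y ≤ t₁) := fun h =>
              absurd hyL (not_lt.2 (by rw [hT0def] at h; linarith))
            simp only [hfdef]
            rw [if_neg hgt, show T0 - (T0 - y) = y by ring]
    have hSZ : S ⊆ geoTreeInfty D := by
      rintro x (⟨r, hr, rfl⟩ | ⟨y, hy, rfl⟩)
      · exact hσp.mem_tree' hp hr.1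
      · exact hσq.mem_tree' hq hy.1
    constructor
    · -- existence
      refine ⟨fun x => f (x * T0), ?_, ?_, ?_, ?_, ?_⟩
      · refine hfcont.comp ((continuous_id.mul continuous_const).continuousOn) ?_
        intro x hx
        simp only [Set.mem_Icc] at hx ⊢
        exact ⟨mul_nonneg hx.1 hT0.le, by nlinarith [hx.2]⟩
      · intro x hx y hy heq
        have hxy := hfinj ⟨mul_nonneg hx.1 hT0.le, by nlinarith [hx.2]⟩
          ⟨mul_nonneg hy.1 hT0.le, by nlinarith [hy.2]⟩ heq
        exact mul_right_cancel₀ (ne_of_gt hT0) hxy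
      · rintro x ⟨r, hr, rfl⟩
        apply hSZ
        rw [← hfim]
        exact ⟨r * T0, ⟨mul_nonneg hr.1 hT0.le, by nlinarith [hr.2]⟩, rfl⟩
      · show f (0 * T0) = p
        rw [zero_mul]
        simp only [hfdef]
        rw [if_pos hA1]
        exact hσp.1
      · show f (1 * T0) = q
        rw [one_mul]
        by_cases h : T0 ≤ t₁
        · have h2 : t₁ + c = 0 := by rw [hT0def] at h; linarith
          have hT : T0 = t₁ := by rw [hT0def]; linarith
          simp only [hfdef]
          rw [if_pos h, hT, hapex, h2]
          exact hσq.1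
        · simp only [hfdef]
          rw [if_neg h, sub_self]
          exact hσq.1
    · -- uniqueness
      have hkey : ∀ γ1 : ℝ → ℂ, IsEmbPathIn (geoTreeInfty D) p q γ1 →
          γ1 '' Set.Icc 0 1 = S := by
        intro γ1 hγ1
        obtain ⟨hγc, hγi, hγX, hγ0, hγ1e⟩ := hγ1
        have himcomp : IsCompact (γ1 '' Set.Icc 0 1) :=
          isCompact_Icc.image_of_continuousOn hγc
        have hjoin : ∀ x : ℂ, x ∉ γ1 '' Set.Icc 0 1 →
            JoinedIn (geoTreeInfty D \ {x}) p q := by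
          intro x hx
          refine ⟨⟨⟨fun y => γ1 y, hγc.comp_continuous continuous_subtype_val
            (fun y => y.2)⟩, ?_, ?_⟩, fun y => ⟨hγX ⟨y, y.2, rfl⟩, ?_⟩⟩
          · show γ1 ((0 : unitInterval) : ℝ) = p
            norm_num [hγ0]
          · show γ1 ((1 : unitInterval) : ℝ) = q
            norm_num [hγ1e]
          · simp only [Set.mem_singleton_iff]
            intro h
            exact hx (h ▸ ⟨y, y.2, rfl⟩)
        obtain ⟨wp, sp, tp, hsp, htp, hsptp⟩ := id hp
        have hextp : ∀ y : ℝ, 0 ≤ y → sp (tp + y) = σp y := by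
          have hsh : IsDGeodesicToInfty D p (fun y => sp (tp + y)) := by
            rw [← hsptp]; exact hsp.shift htp.le
          exact fun y hy => (hb p hp).2 _ _ hsh hσp (Set.mem_Ici.2 hy)
        obtain ⟨wq, sq, tq, hsq, htq, hsqtq⟩ := id hq
        have hextq : ∀ y : ℝ, 0 ≤ y → sq (tq + y) = σq y := by
          have hsh : IsDGeodesicToInfty D q (fun y => sq (tq + y)) := by
            rw [← hsqtq]; exact hsq.shift htq.le
          exact fun y hy => (hb q hq).2 _ _ hsh hσq (Set.mem_Ici.2 hy)
        have hmainp : ∀ r : ℝ, 0 < r → r < t₁ → σp r ∈ γ1 '' Set.Icc 0 1 := by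
          intro r h0 hA'
          by_contra hnot
          have hJpq := hjoin _ hnot
          have hseg : JoinedIn (geoTreeInfty D \ {σp r}) (σq 0) (σq (t₁ + c)) := by
            refine joinedIn_seg hσq.2.1 le_rfl hA2 ?_
            intro y hy
            refine ⟨hσq.mem_tree' hq hy.1, ?_⟩
            simp only [Set.mem_singleton_iff]
            intro hcon
            have hy2 : y = r + c := hmatch r y h0.le hy.1 hcon.symm
            have hrA : r ∈ A := by
              refine ⟨by rw [hm₀]; exact max_le h0.le (by linarith [hy.1]), ?_⟩
              rw [← hy2]; exact hcon.symm
            linarith [hlb r hrA]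
          rw [hσq.1] at hseg
          have hJ := hJpq.trans hseg
          rw [← hapex] at hJ
          refine hi wp sp hsp (tp + r) (by linarith) p
            ⟨tp, ⟨htp, by linarith⟩, hsptp⟩
            (σp t₁) ⟨tp + t₁, Set.mem_Ioi.2 (by linarith), hextp t₁ hA1⟩ ?_
          rw [hextp r h0.le]
          exact hJ
        have hmainq : ∀ r : ℝ, 0 < r → r < t₁ + c → σq r ∈ γ1 '' Set.Icc 0 1 := by
          intro r h0 hA'
          by_contra hnot
          have hJpq := hjoin _ hnot
          have hseg : JoinedIn (geoTreeInfty D \ {σq r}) (σp 0) (σp t₁) := by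
            refine joinedIn_seg hσp.2.1 le_rfl hA1 ?_
            intro y hy
            refine ⟨hσp.mem_tree' hp hy.1, ?_⟩
            simp only [Set.mem_singleton_iff]
            intro hcon
            have hy2 : r = y + c := hmatch y r hy.1 h0.le hcon
            have hyA : y ∈ A := by
              refine ⟨by rw [hm₀]; exact max_le hy.1 (by linarith), ?_⟩
              rw [← hy2]; exact hcon
            have hy3 : y = t₁ := le_antisymm hy.2 (hlb y hyA)
            rw [hy3] at hy2
            linarith
          rw [hσp.1] at hseg
          have hJ := hJpq.symm.trans hseg
          rw [hapex] at hJ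
          refine hi wq sq hsq (tq + r) (by linarith) q
            ⟨tq, ⟨htq, by linarith⟩, hsqtq⟩
            (σq (t₁ + c)) ⟨tq + (t₁ + c), Set.mem_Ioi.2 (by linarith), hextq _ hA2⟩ ?_
          rw [hextq r h0.le]
          exact hJ
        have hapexmem : σp t₁ ∈ γ1 '' Set.Icc 0 1 := by
          rcases eq_or_lt_of_le hA1 with h | h
          · rw [← h, hσp.1]
            exact ⟨0, ⟨le_rfl, zero_le_one⟩, hγ0⟩
          · have hcw : ContinuousWithinAt σp (Set.Ioo 0 t₁) t₁ :=
              (hσp.2.1 t₁ (Set.mem_Ici.2 hA1)).mono (fun x hx => Set.mem_Ici.2 hx.1.le)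
            have ht₁cl : t₁ ∈ closure (Set.Ioo 0 t₁) := by
              rw [closure_Ioo (ne_of_lt h)]
              exact ⟨hA1, le_rfl⟩
            have hcl : σp t₁ ∈ closure (σp '' Set.Ioo 0 t₁) :=
              hcw.mem_closure_image ht₁cl
            have hsub : σp '' Set.Ioo 0 t₁ ⊆ γ1 '' Set.Icc 0 1 := by
              rintro x ⟨r, hr, rfl⟩
              exact hmainp r hr.1 hr.2
            exact himcomp.isClosed.closure_subset ((closure_mono hsub) hcl)
        have hstepA : S ⊆ γ1 '' Set.Icc 0 1 := by
          rintro x (⟨r, hr, rfl⟩ | ⟨y, hy, rfl⟩)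
          · rcases eq_or_lt_of_le hr.1 with h | h
            · rw [← h, hσp.1]
              exact ⟨0, ⟨le_rfl, zero_le_one⟩, hγ0⟩
            · rcases eq_or_lt_of_le hr.2 with h2 | h2
              · rw [h2]; exact hapexmem
              · exact hmainp r h h2
          · rcases eq_or_lt_of_le hy.1 with h | h
            · rw [← h, hσq.1]
              exact ⟨1, ⟨zero_le_one, le_rfl⟩, hγ1e⟩
            · rcases eq_or_lt_of_le hy.2 with h2 | h2
              · rw [h2, ← hapex]; exact hapexmem
              · exact hmainq y h h2
        have hSconn : IsPreconnected S := by
          refine IsPreconnected.union (σp t₁) ⟨t₁, ⟨hA1, le_rfl⟩, rfl⟩ ?_ ?_ ?_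
          · rw [hapex]; exact ⟨t₁ + c, ⟨hA2, le_rfl⟩, rfl⟩
          · exact isPreconnected_Icc.image _ (hσp.2.1.mono (fun x hx => hx.1))
          · exact isPreconnected_Icc.image _ (hσq.2.1.mono (fun x hx => hx.1))
        haveI : CompactSpace (Set.Icc (0:ℝ) 1) := isCompact_iff_compactSpace.mp isCompact_Icc
        set F : Set.Icc (0:ℝ) 1 → ℂ := fun x => γ1 x with hFdef
        have hFc : Continuous F := hγc.comp_continuous continuous_subtype_val (fun x => x.2)
        have hFi : Function.Injective F := fun x y h => Subtype.ext (hγi x.2 y.2 h)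
        have hFcl : IsClosedMap F := (hFc.isClosedEmbedding hFi).isClosedMap
        have hrange : S ⊆ Set.range F := by
          intro x hx
          obtain ⟨r, hr, hre⟩ := hstepA hx
          exact ⟨⟨r, hr⟩, hre⟩
        have hpre : IsPreconnected (F ⁻¹' S) :=
          hSconn.preimage_of_isClosedMap hFi hFcl hrange
        have hC : IsPreconnected (Subtype.val '' (F ⁻¹' S) : Set ℝ) :=
          hpre.image _ continuous_subtype_val.continuousOn
        have h0C : (0:ℝ) ∈ Subtype.val '' (F ⁻¹' S) := by
          refine ⟨⟨0, ⟨le_rfl, zero_le_one⟩⟩, ?_, rfl⟩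
          show γ1 0 ∈ S
          rw [hγ0]
          exact Or.inl ⟨0, ⟨le_rfl, hA1⟩, hσp.1⟩
        have h1C : (1:ℝ) ∈ Subtype.val '' (F ⁻¹' S) := by
          refine ⟨⟨1, ⟨zero_le_one, le_rfl⟩⟩, ?_, rfl⟩
          show γ1 1 ∈ S
          rw [hγ1e]
          exact Or.inr ⟨0, ⟨le_rfl, hA2⟩, hσq.1⟩
        have hIcc : Set.Icc (0:ℝ) 1 ⊆ Subtype.val '' (F ⁻¹' S) :=
          hC.Icc_subset h0C h1C
        have hstepB : γ1 '' Set.Icc 0 1 ⊆ S := by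
          rintro x ⟨r, hr, rfl⟩
          obtain ⟨⟨r', hr'⟩, hmem, hval⟩ := hIcc hr
          have hrr : r' = r := hval
          rw [← hrr]
          exact hmem
        exact Set.Subset.antisymm hstepB hstepA
      intro γ γ' h h'
      rw [hkey γ h, hkey γ' h']
end
end

section
/- Let D be a metric on ℂ inducing the Euclidean topology. Assume: (a) any two distinct points of Z_∞ are joined by a continuous injective path in Z_∞ which is unique up to reparametrization; (b) every p ∈ Z_∞ has exactly one D-geodesic to ∞; (c) there are points xₙ ∈ Z_∞ with |xₙ| → ∞ such that every D-geodesic from a point of ℂ to ∞ passes through xₙ for all but finitely many n. Let η : [0,∞) → ℂ be continuous and injective with η((0,∞)) ⊆ Z_∞ and |η(t)| → ∞ as t → ∞, and suppose that the image of η contains xₙ for all but finitely many n. Then for every t > 0, the image of η restricted to [t,∞) equals the image of the unique D-geodesic from η(t) to ∞. -/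
open Set Metric Filter

noncomputable section

/-- Image of `[0,1]` under the affine map `r ↦ a + r * (b - a)` when `a < b`. -/
lemma affImage (a b : ℝ) (h : a < b) :
    (fun r : ℝ => a + r * (b - a)) '' Set.Icc 0 1 = Set.Icc a b := by
  ext y
  simp only [Set.mem_image, Set.mem_Icc]
  constructor
  · rintro ⟨r, ⟨hr0, hr1⟩, rfl⟩
    constructor <;> nlinarith
  · rintro ⟨hy1, hy2⟩
    refine ⟨(y - a) / (b - a), ⟨div_nonneg (by linarith) (by linarith),
      (div_le_one (by linarith)).2 (by linarith)⟩, ?_⟩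
    rw [div_mul_cancel₀ (y - a) (show b - a ≠ 0 by linarith)]; ring

/-- Rays in `Z_∞` are tails of geodesics.
Assume `D` induces the Euclidean topology and:
(a) any two distinct points of `Z_∞` are joined by a continuous injective path in `Z_∞`,
unique up to reparametrization;
(b) every `p ∈ Z_∞` has exactly one `D`-geodesic to `∞`;
(c) there are points `xₙ ∈ Z_∞` with `|xₙ| → ∞` such that every `D`-geodesic to `∞` passes
through all but finitely many of the `xₙ`.
If `η : [0,∞) → ℂ` is continuous and injective with `η((0,∞)) ⊆ Z_∞`, `|η(t)| → ∞`, and the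
image of `η` contains `xₙ` for all but finitely many `n`, then for every `t > 0` the image of
`η` restricted to `[t,∞)` equals the image of the unique `D`-geodesic from `η t` to `∞`. -/
theorem statement_15 (D : ℂ → ℂ → ℝ) (hD : IsMetricOn D) (htop : InducesEuclTop D)
    (ha : ∀ p ∈ geoTreeInfty D, ∀ q ∈ geoTreeInfty D, p ≠ q →
      (∃ γ : ℝ → ℂ, IsEmbPathIn (geoTreeInfty D) p q γ) ∧
      ∀ γ γ' : ℝ → ℂ, IsEmbPathIn (geoTreeInfty D) p q γ →
        IsEmbPathIn (geoTreeInfty D) p q γ' → γ '' Set.Icc 0 1 = γ' '' Set.Icc 0 1)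
    (hb : ∀ p ∈ geoTreeInfty D, (∃ σ, IsDGeodesicToInfty D p σ) ∧
      ∀ σ σ' : ℝ → ℂ, IsDGeodesicToInfty D p σ → IsDGeodesicToInfty D p σ' →
        Set.EqOn σ σ' (Set.Ici 0))
    (x : ℕ → ℂ) (hxZ : ∀ n, x n ∈ geoTreeInfty D)
    (hxinf : Filter.Tendsto (fun n => ‖x n‖) Filter.atTop Filter.atTop)
    (hcpass : ∀ (w : ℂ) (σ : ℝ → ℂ), IsDGeodesicToInfty D w σ →
      ∀ᶠ n in Filter.atTop, x n ∈ σ '' Set.Ici 0)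
    (η : ℝ → ℂ) (hηcont : ContinuousOn η (Set.Ici 0)) (hηinj : Set.InjOn η (Set.Ici 0))
    (hηZ : η '' Set.Ioi 0 ⊆ geoTreeInfty D)
    (hηinf : Filter.Tendsto (fun t => ‖η t‖) Filter.atTop Filter.atTop)
    (hηpass : ∀ᶠ n in Filter.atTop, x n ∈ η '' Set.Ici 0) :
    ∀ t > (0:ℝ), ∀ σ : ℝ → ℂ, IsDGeodesicToInfty D (η t) σ →
      η '' Set.Ici t = σ '' Set.Ici 0 := by
  intro t ht σ hσ
  obtain ⟨hσ0, hσcont, hσd⟩ := hσ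
  have hσinj : Set.InjOn σ (Set.Ici 0) := by
    intro a ha' b hb' hab
    rcases le_total a b with h | h
    · have := hσd a b ha' h; rw [hab, hD.self_dist] at this; linarith
    · have := hσd b a hb' h; rw [hab, hD.self_dist] at this; linarith
  have hηtZ : η t ∈ geoTreeInfty D := hηZ ⟨t, ht, rfl⟩
  have hσZ : ∀ s, 0 ≤ s → σ s ∈ geoTreeInfty D := by
    intro s hs
    rcases eq_or_lt_of_le hs with h | h
    · rw [← h, hσ0]; exact hηtZ
    · exact ⟨η t, σ, s, ⟨hσ0, hσcont, hσd⟩, h, rfl⟩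
  -- Key step: matching segments of η and σ have equal images.
  have key : ∀ sn un : ℝ, t < sn → 0 < un → η sn = σ un →
      η '' Set.Icc t sn = σ '' Set.Icc 0 un := by
    intro sn un hsn hun heq
    have htsn : (0:ℝ) < sn := lt_trans ht hsn
    have hqZ : η sn ∈ geoTreeInfty D := hηZ ⟨sn, htsn, rfl⟩
    have hne : η t ≠ η sn := fun h =>
      (ne_of_lt hsn) (hηinj (le_of_lt ht) (le_of_lt htsn) h)
    obtain ⟨-, huniq⟩ := ha (η t) hηtZ (η sn) hqZ hne
    set aff1 : ℝ → ℝ := fun r => t + r * (sn - t) with haff1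
    set aff2 : ℝ → ℝ := fun r => 0 + r * (un - 0) with haff2
    have haff1img : aff1 '' Set.Icc 0 1 = Set.Icc t sn := affImage t sn hsn
    have haff2img : aff2 '' Set.Icc 0 1 = Set.Icc 0 un := affImage 0 un hun
    have haff1mem : ∀ r ∈ Set.Icc (0:ℝ) 1, aff1 r ∈ Set.Icc t sn := by
      intro r hr; rw [← haff1img]; exact ⟨r, hr, rfl⟩
    have haff2mem : ∀ r ∈ Set.Icc (0:ℝ) 1, aff2 r ∈ Set.Icc 0 un := by
      intro r hr; rw [← haff2img]; exact ⟨r, hr, rfl⟩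
    have haff1cont : Continuous aff1 := by
      rw [haff1]; continuity
    have haff2cont : Continuous aff2 := by
      rw [haff2]; continuity
    have h1 : IsEmbPathIn (geoTreeInfty D) (η t) (η sn) (fun r => η (aff1 r)) := by
      refine ⟨?_, ?_, ?_, ?_, ?_⟩
      · exact hηcont.comp haff1cont.continuousOn
          (fun r hr => le_trans (le_of_lt ht) (haff1mem r hr).1)
      · intro r1 hr1 r2 hr2 hrr
        have e1 := (haff1mem r1 hr1).1
        have e2 := (haff1mem r2 hr2).1
        have := hηinj (le_trans (le_of_lt ht) e1) (le_trans (le_of_lt ht) e2) hrr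
        have h' : r1 * (sn - t) = r2 * (sn - t) := by
          simpa [haff1] using this
        exact mul_right_cancel₀ (by linarith : sn - t ≠ 0) h'
      · rintro _ ⟨r, hr, rfl⟩
        exact hηZ ⟨aff1 r, lt_of_lt_of_le ht (haff1mem r hr).1, rfl⟩
      · simp [haff1]
      · show η (aff1 1) = η sn
        congr 1; simp [haff1]
    have h2 : IsEmbPathIn (geoTreeInfty D) (η t) (η sn) (fun r => σ (aff2 r)) := by
      refine ⟨?_, ?_, ?_, ?_, ?_⟩
      · exact hσcont.comp haff2cont.continuousOn
          (fun r hr => (haff2mem r hr).1)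
      · intro r1 hr1 r2 hr2 hrr
        have := hσinj (haff2mem r1 hr1).1 (haff2mem r2 hr2).1 hrr
        have h' : r1 * (un - 0) = r2 * (un - 0) := by
          simpa [haff2] using this
        exact mul_right_cancel₀ (by linarith : un - 0 ≠ 0) h'
      · rintro _ ⟨r, hr, rfl⟩
        exact hσZ (aff2 r) (haff2mem r hr).1
      · show σ (aff2 0) = η t
        rw [show aff2 0 = 0 by simp [haff2], hσ0]
      · show σ (aff2 1) = η sn
        rw [show aff2 1 = un by simp [haff2], ← heq]
    have himg := huniq _ _ h1 h2
    calc η '' Set.Icc t sn = η '' (aff1 '' Set.Icc 0 1) := by rw [haff1img]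
      _ = (fun r => η (aff1 r)) '' Set.Icc 0 1 := (Set.image_comp η aff1 _).symm
      _ = (fun r => σ (aff2 r)) '' Set.Icc 0 1 := himg
      _ = σ '' (aff2 '' Set.Icc 0 1) := Set.image_comp σ aff2 _
      _ = σ '' Set.Icc 0 un := by rw [haff2img]
  -- bounds on compact intervals
  have boundη : ∀ r : ℝ, ∃ M, ∀ s ∈ Set.Icc 0 r, ‖η s‖ ≤ M := by
    intro r
    obtain ⟨M, hM⟩ := isCompact_Icc.exists_bound_of_continuousOn
      (hηcont.mono (Set.Icc_subset_Ici_self (a := r) (b := 0)))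
    exact ⟨M, fun s hs => by simpa using hM s hs⟩
  have boundσ : ∀ r : ℝ, ∃ M, ∀ s ∈ Set.Icc 0 r, ‖σ s‖ ≤ M := by
    intro r
    obtain ⟨M, hM⟩ := isCompact_Icc.exists_bound_of_continuousOn
      (hσcont.mono (Set.Icc_subset_Ici_self (a := r) (b := 0)))
    exact ⟨M, fun s hs => by simpa using hM s hs⟩
  have hev : ∀ᶠ n in Filter.atTop,
      x n ∈ σ '' Set.Ici 0 ∧ x n ∈ η '' Set.Ici 0 :=
    (hcpass _ _ ⟨hσ0, hσcont, hσd⟩).and hηpass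
  ext y
  constructor
  · rintro ⟨s, hs, rfl⟩
    have hts : t ≤ s := hs
    obtain ⟨Ms, hMs⟩ := boundη s
    obtain ⟨n, ⟨⟨un, hun0, huneq⟩, ⟨sn, hsn0, hsneq⟩⟩, hngt⟩ :=
      (hev.and (hxinf.eventually_gt_atTop Ms)).exists
    have hsns : s < sn := by
      by_contra h
      push_neg at h
      have := hMs sn ⟨hsn0, h⟩
      rw [hsneq] at this; linarith
    have hunpos : 0 < un := by
      rcases lt_or_eq_of_le (show (0:ℝ) ≤ un from hun0) with h | h
      · exact h
      · exfalso
        have : x n = η t := by rw [← huneq, ← h, hσ0]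
        have hb := hMs t ⟨le_of_lt ht, hts⟩
        rw [← this] at hb; linarith
    have hk := key sn un (lt_of_le_of_lt hts hsns) hunpos (hsneq.trans huneq.symm)
    have hmem : η s ∈ η '' Set.Icc t sn := ⟨s, ⟨hts, le_of_lt hsns⟩, rfl⟩
    rw [hk] at hmem
    obtain ⟨u, hu, hue⟩ := hmem
    exact ⟨u, hu.1, hue⟩
  · rintro ⟨u, hu, rfl⟩
    have hu0 : (0:ℝ) ≤ u := hu
    obtain ⟨Mu, hMu⟩ := boundσ u
    obtain ⟨Mt, hMt⟩ := boundη t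
    obtain ⟨n, ⟨⟨un, hun0, huneq⟩, ⟨sn, hsn0, hsneq⟩⟩, hngt⟩ :=
      (hev.and (hxinf.eventually_gt_atTop (max Mu Mt))).exists
    have huun : u < un := by
      by_contra h
      push_neg at h
      have := hMu un ⟨hun0, h⟩
      rw [huneq] at this
      have := le_max_left Mu Mt
      linarith
    have htsn : t < sn := by
      by_contra h
      push_neg at h
      have := hMt sn ⟨hsn0, h⟩
      rw [hsneq] at this
      have := le_max_right Mu Mt
      linarith
    have hk := key sn un htsn (lt_of_le_of_lt hu0 huun) (hsneq.trans huneq.symm)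
    have hmem : σ u ∈ σ '' Set.Icc 0 un := ⟨u, ⟨hu0, le_of_lt huun⟩, rfl⟩
    rw [← hk] at hmem
    obtain ⟨s, hsm, hse⟩ := hmem
    exact ⟨s, hsm.1, hse⟩
end
end
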